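/- Let A = C*C and B = D*D with C, D invertible n×n complex matrices, and let U = polar(C D^{-1}) be the unitary polar factor of C D^{-1}. Then A # B = C* U D. -/

import Mathlib

open Matrix ComplexOrder

/-- The positive semidefinite square root of a positive semidefinite matrix
(as defined in Mathlib of December 2024, since removed). -/
noncomputable def Matrix.PosSemidef.sqrt {n 𝕜 : Type*} [Fintype n] [DecidableEq n] [RCLike 𝕜]
    {A : Matrix n n 𝕜} (hA : A.PosSemidef) : Matrix n n 𝕜 :=
  hA.1.eigenvectorUnitary.1 * diagonal ((↑) ∘ (Real.sqrt ·) ∘ hA.1.eigenvalues) *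
    (star hA.1.eigenvectorUnitary : Matrix n n 𝕜)

lemma Matrix.PosSemidef.sqrt_isHermitian {n 𝕜 : Type*} [Fintype n] [DecidableEq n] [RCLike 𝕜]
    {A : Matrix n n 𝕜} (hA : A.PosSemidef) : hA.sqrt.IsHermitian := by
  unfold Matrix.PosSemidef.sqrt
  rw [IsHermitian, conjTranspose_mul, conjTranspose_mul, diagonal_conjTranspose]
  simp only [Matrix.star_eq_conjTranspose, conjTranspose_conjTranspose, mul_assoc]
  congr 3
  funext i
  simp

lemma geomMean_aux {n : ℕ} {A B : Matrix (Fin n) (Fin n) ℂ} (hA : A.PosDef) (hB : B.PosDef) :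
    ((hA.posSemidef.sqrt)⁻¹ * B * (hA.posSemidef.sqrt)⁻¹).PosSemidef := by
  have h := hB.posSemidef.conjTranspose_mul_mul_same (hA.posSemidef.sqrt)⁻¹
  rwa [(hA.posSemidef.sqrt_isHermitian.inv).eq] at h

/-- The geometric mean `A # B = A^{1/2} (A^{-1/2} B A^{-1/2})^{1/2} A^{1/2}` of two
Hermitian positive definite matrices. -/
noncomputable def geomMean {n : ℕ} {A B : Matrix (Fin n) (Fin n) ℂ}
    (hA : A.PosDef) (hB : B.PosDef) : Matrix (Fin n) (Fin n) ℂ :=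
  hA.posSemidef.sqrt * (geomMean_aux hA hB).sqrt * hA.posSemidef.sqrt

/-
`A # B` is the unique positive semidefinite solution `G` of the Riccati equation
`G A⁻¹ G = B`: for such `G`, `X = A^{-1/2} G A^{-1/2}` is positive semidefinite with
`X² = A^{-1/2} B A^{-1/2}`, so `X` is the square root in the definition of `A # B`.
With `N = ((C D⁻¹)ᴴ (C D⁻¹))^{1/2}` we have `A = Dᴴ N² D` and `Cᴴ (C D⁻¹ N⁻¹) D = Dᴴ N D`,
which is positive semidefinite and satisfies `(Dᴴ N D)(D⁻¹ N⁻² D⁻ᴴ)(Dᴴ N D) = Dᴴ D = B`.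
-/

open scoped MatrixOrder

namespace Matrix

variable {n 𝕜 : Type*} [Fintype n] [DecidableEq n] [RCLike 𝕜]

namespace PosSemidef

variable {A : Matrix n n 𝕜} (hA : A.PosSemidef)

lemma sqrt_eq_cfcSqrt : hA.sqrt = CFC.sqrt A := by
  rw [CFC.sqrt_eq_real_sqrt A hA.nonneg, cfcₙ_eq_cfc (hf0 := Real.sqrt_zero), hA.1.cfc_eq]
  rfl

lemma sqrt_mul_self : hA.sqrt * hA.sqrt = A := by
  rw [hA.sqrt_eq_cfcSqrt]
  exact CFC.sqrt_mul_sqrt_self A hA.nonneg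

lemma posSemidef_sqrt : hA.sqrt.PosSemidef := by
  rw [hA.sqrt_eq_cfcSqrt]
  exact (CFC.sqrt_nonneg A).posSemidef

lemma eq_sqrt_of_sq_eq {X : Matrix n n 𝕜} (hX : X.PosSemidef) (hXA : X ^ 2 = A) :
    X = hA.sqrt := by
  rw [hA.sqrt_eq_cfcSqrt, ← hXA]
  exact (CFC.sqrt_sq X hX.nonneg).symm

end PosSemidef

lemma PosDef.isUnit_det_sqrt {A : Matrix n n 𝕜} (hA : A.PosDef) :
    IsUnit hA.posSemidef.sqrt.det :=
  isUnit_det_of_right_inverse (B := hA.posSemidef.sqrt * A⁻¹) <| by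
    rw [← Matrix.mul_assoc, hA.posSemidef.sqrt_mul_self,
      mul_nonsing_inv _ ((isUnit_iff_isUnit_det A).mp hA.isUnit)]

lemma mul_mul_mul_inv_mul_mul_self_mul_mul_mul {R : Type*} [CommRing R] {P N Q : Matrix n n R}
    (hP : IsUnit P.det) (hN : IsUnit N.det) (hQ : IsUnit Q.det) :
    P * N * Q * (P * (N * N) * Q)⁻¹ * (P * N * Q) = P * Q := by
  simp only [Matrix.mul_inv_rev, Matrix.mul_assoc, mul_nonsing_inv_cancel_left _ _ hQ,
    mul_nonsing_inv_cancel_left _ _ hN, nonsing_inv_mul_cancel_left _ _ hP,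
    nonsing_inv_mul_cancel_left _ _ hN]

end Matrix

theorem geomMean_eq_of_mul_inv_mul_eq {n : ℕ} {A B G : Matrix (Fin n) (Fin n) ℂ}
    (hA : A.PosDef) (hB : B.PosDef) (hG : G.PosSemidef) (hGAG : G * A⁻¹ * G = B) :
    geomMean hA hB = G := by
  set S := hA.posSemidef.sqrt
  have hS : IsUnit S.det := hA.isUnit_det_sqrt
  have hSS : S * S = A := hA.posSemidef.sqrt_mul_self
  have hSinv : (S⁻¹)ᴴ = S⁻¹ := hA.posSemidef.sqrt_isHermitian.inv.eq
  have hX : (S⁻¹ * G * S⁻¹).PosSemidef := by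
    simpa only [hSinv] using hG.conjTranspose_mul_mul_same S⁻¹
  have hX2 : (S⁻¹ * G * S⁻¹) ^ 2 = S⁻¹ * B * S⁻¹ := by
    rw [← hGAG, ← hSS, Matrix.mul_inv_rev, sq]
    simp only [Matrix.mul_assoc]
  rw [geomMean, ← (geomMean_aux hA hB).eq_sqrt_of_sq_eq hX hX2]
  change S * (S⁻¹ * G * S⁻¹) * S = G
  simp only [Matrix.mul_assoc, nonsing_inv_mul _ hS, Matrix.mul_one,
    mul_nonsing_inv_cancel_left _ _ hS]

theorem geomMean_eq_conj_polar_general {n : ℕ} {A B C D : Matrix (Fin n) (Fin n) ℂ}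
    (hA : A.PosDef) (hB : B.PosDef)
    (hD : IsUnit D.det)
    (hAC : A = Cᴴ * C) (hBD : B = Dᴴ * D)
    (hM : ((C * D⁻¹)ᴴ * (C * D⁻¹)).PosDef) :
    geomMean hA hB = Cᴴ * (C * D⁻¹ * (hM.posSemidef.sqrt)⁻¹) * D := by
  set N := hM.posSemidef.sqrt
  have hN : IsUnit N.det := hM.isUnit_det_sqrt
  have hDH : IsUnit Dᴴ.det := (det_conjTranspose D).symm ▸ hD.star
  have hA_eq : A = Dᴴ * (N * N) * D := by
    rw [hM.posSemidef.sqrt_mul_self, hAC, conjTranspose_mul, conjTranspose_nonsing_inv]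
    simp only [Matrix.mul_assoc, mul_nonsing_inv_cancel_left _ _ hDH, nonsing_inv_mul _ hD,
      Matrix.mul_one]
  have hG : Cᴴ * (C * D⁻¹ * N⁻¹) * D = Dᴴ * N * D := by
    calc Cᴴ * (C * D⁻¹ * N⁻¹) * D = A * D⁻¹ * N⁻¹ * D := by simp only [hAC, Matrix.mul_assoc]
      _ = Dᴴ * N * D := by
        simp only [hA_eq, Matrix.mul_assoc, mul_nonsing_inv_cancel_left _ _ hD,
          mul_nonsing_inv_cancel_left _ _ hN]
  rw [hG]
  refine geomMean_eq_of_mul_inv_mul_eq hA hB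
    (hM.posSemidef.posSemidef_sqrt.conjTranspose_mul_mul_same D) ?_
  rw [hA_eq, hBD]
  exact mul_mul_mul_inv_mul_mul_self_mul_mul_mul hDH hN hD

/-- If `A = Cᴴ C`, `B = Dᴴ D` with `C, D` invertible, then `A # B = Cᴴ * polar(C D⁻¹) * D`,
where `polar(M) = M * (Mᴴ M)^{-1/2}` is the unitary polar factor. -/
theorem geomMean_eq_conj_polar {n : ℕ} {A B C D : Matrix (Fin n) (Fin n) ℂ}
    (hA : A.PosDef) (hB : B.PosDef)
    (hC : IsUnit C.det) (hD : IsUnit D.det)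
    (hAC : A = Cᴴ * C) (hBD : B = Dᴴ * D)
    (hM : ((C * D⁻¹)ᴴ * (C * D⁻¹)).PosDef) :
    geomMean hA hB = Cᴴ * (C * D⁻¹ * (hM.posSemidef.sqrt)⁻¹) * D :=
  geomMean_eq_conj_polar_general hA hB hD hAC hBD hM
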